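/- arXiv:1008.4167 — 2 statements merged into one kernel-verified Lean document; each statement's English description precedes it below -/
import Mathlib

section
/- Let w and z be words such that σ^j w ≤ z lexicographically for every j ≥ 0. Then B̂(σ^j w) ≤ B̂(z) for every j ≥ 0. -/
/-- The shift map iterated `k` times: `(shift k w) i = w (i + k)`,
so `shift k w = w_k w_{k+1} w_{k+2} …`. -/
def shift (k : ℕ) (w : ℕ → ℕ) : ℕ → ℕ := fun i => w (i + k)

/-- Strict lexicographic order on infinite words: `v < w` iff there is an index `i`
with `v j = w j` for all `j < i` and `v i < w i`. -/
def LexLt (v w : ℕ → ℕ) : Prop := ∃ i, (∀ j < i, v j = w j) ∧ v i < w i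

/-- Weak lexicographic order: `v ≤ w` iff `v < w` or `v = w`. -/
def LexLe (v w : ℕ → ℕ) : Prop := LexLt v w ∨ v = w

/-- A word is a bounded sequence of natural numbers. -/
def IsWord (w : ℕ → ℕ) : Prop := ∃ M, ∀ i, w i ≤ M

/-- `fword w β = ∑_{i ≥ 0} w_i β^{-(i+1)} = w_0/β + w_1/β² + …`. -/
noncomputable def fword (w : ℕ → ℕ) (β : ℝ) : ℝ := ∑' i : ℕ, (w i : ℝ) / β ^ (i + 1)

open Classical in
/-- `B̂(w)`: zero for the zero word, and otherwise `inf {β > 1 : f_w(β) ≤ 1}`. -/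
noncomputable def Bhat (w : ℕ → ℕ) : ℝ :=
  if w = fun _ => 0 then 0 else sInf {β : ℝ | 1 < β ∧ fword w β ≤ 1}

/-- `B̄(w) = sup_{j ≥ 0} B̂(σ^j w)`. -/
noncomputable def Bbar (w : ℕ → ℕ) : ℝ := ⨆ j : ℕ, Bhat (shift j w)

/-- The sequence `A_i` in the β-expansion of `β`: `A_0 = β`, `A_{i+1} = β (A_i - ⌊A_i⌋)`. -/
noncomputable def betaA (β : ℝ) : ℕ → ℝ
  | 0 => β
  | i + 1 => β * (betaA β i - (⌊betaA β i⌋₊ : ℝ))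

/-- The β-expansion of `β`: the word `a` with `a_i = ⌊A_i⌋`. -/
noncomputable def betaExp (β : ℝ) : ℕ → ℕ := fun i => ⌊betaA β i⌋₊

/-- The domain `W(β)` of the β-shift: all words `w` with `σ^k w < a` lexicographically
for every `k ≥ 0`, where `a` is the β-expansion of `β`. -/
def Wset (β : ℝ) : Set (ℕ → ℕ) :=
  {w | IsWord w ∧ ∀ k : ℕ, LexLt (shift k w) (betaExp β)}

/-- `π` is a permutation of `{1, …, n}` (viewed as a map `ℕ → ℕ`). -/
def IsPerm (n : ℕ) (π : ℕ → ℕ) : Prop := Set.BijOn π (Set.Icc 1 n) (Set.Icc 1 n)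

/-- The word `w` induces the permutation `π` of `{1, …, n}`: for all `1 ≤ i, j ≤ n`,
`π(i) < π(j)` iff `σ^{i-1} w < σ^{j-1} w` lexicographically. -/
def Induces (n : ℕ) (w : ℕ → ℕ) (π : ℕ → ℕ) : Prop :=
  ∀ i ∈ Set.Icc 1 n, ∀ j ∈ Set.Icc 1 n,
    (π i < π j ↔ LexLt (shift (i - 1) w) (shift (j - 1) w))

/-- `π ∈ Al(Σ_β)`: some word in `W(β)` induces `π`. -/
def Allowed (β : ℝ) (n : ℕ) (π : ℕ → ℕ) : Prop := ∃ w ∈ Wset β, Induces n w π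

/-- The shift-complexity `B(π) = inf {β > 1 : π ∈ Al(Σ_β)}`. -/
noncomputable def Bperm (n : ℕ) (π : ℕ → ℕ) : ℝ :=
  sInf {β : ℝ | 1 < β ∧ Allowed β n π}

/-- `ρ_m` is the permutation `1 m 2 (m-1) 3 (m-2) …` of `{1, …, m}`:
`ρ(2i-1) = i` and `ρ(2i) = m+1-i`. -/
def IsRho (m : ℕ) (ρ : ℕ → ℕ) : Prop :=
  IsPerm m ρ ∧ (∀ i, 1 ≤ i → 2 * i - 1 ≤ m → ρ (2 * i - 1) = i) ∧
    (∀ i, 1 ≤ i → 2 * i ≤ m → ρ (2 * i) = m + 1 - i)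

/-! The key point is that `f_z(β) ≤ 1` propagates to every shift of `w`. Put
`S = sup_k f_{σ^k w}(β)`. If `σ^k w < z` first differs from `z` at position `n - 1`, then
`f_{σ^k w}(β) ≤ f_z(β) + (S - 1) / β^n`, because the letter there is smaller by at least one
and the remaining tail contributes at most `S / β^n`. Were `S > 1`, this would give
`S ≤ 1 + (S - 1) / β < S`. Hence every `β > 1` with `f_z(β) ≤ 1` also satisfies
`f_{σ^j w}(β) ≤ 1`, and `B̂(σ^j w) ≤ B̂(z)` follows by comparing infima. -/

lemma shift_shift (m k : ℕ) (w : ℕ → ℕ) : shift m (shift k w) = shift (m + k) w := by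
  funext i; simp only [shift, add_assoc]

lemma LexLe.apply_zero_le {v z : ℕ → ℕ} (h : LexLe v z) : v 0 ≤ z 0 := by
  rcases h with ⟨i, hpre, hi⟩ | rfl
  · rcases Nat.eq_zero_or_pos i with rfl | hi0
    · exact hi.le
    · exact (hpre 0 hi0).le
  · rfl

lemma le_of_forall_lexLe_shift {w z : ℕ → ℕ} (h : ∀ j, LexLe (shift j w) z) (i : ℕ) :
    w i ≤ z 0 := by
  simpa [shift] using (h i).apply_zero_le

lemma IsWord.shift {w : ℕ → ℕ} (hw : IsWord w) (k : ℕ) : IsWord (shift k w) :=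
  let ⟨M, hM⟩ := hw; ⟨M, fun _ => hM _⟩

section fword

variable {β : ℝ}

lemma hasSum_const_div_pow (M : ℝ) (hβ : 1 < β) :
    HasSum (fun i : ℕ => M / β ^ (i + 1)) (M / (β - 1)) := by
  have hβ0 : 0 < β := one_pos.trans hβ
  have hgeom :=
    (hasSum_geometric_of_lt_one (inv_nonneg.2 hβ0.le) (inv_lt_one_of_one_lt₀ hβ)).mul_left (M / β)
  have hterm : (fun i : ℕ => M / β ^ (i + 1)) = fun i => M / β * β⁻¹ ^ i := by
    funext i; rw [inv_pow, pow_succ']; field_simp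
  have hsum : M / (β - 1) = M / β * (1 - β⁻¹)⁻¹ := by
    have : β - 1 ≠ 0 := by linarith
    field_simp
  rwa [hterm, hsum]

lemma IsWord.summable_fword {w : ℕ → ℕ} (hw : IsWord w) (hβ : 1 < β) :
    Summable (fun i : ℕ => (w i : ℝ) / β ^ (i + 1)) := by
  obtain ⟨M, hM⟩ := hw
  refine (hasSum_const_div_pow M hβ).summable.of_nonneg_of_le (fun i => by positivity) fun i => ?_
  gcongr
  exact_mod_cast hM i

lemma fword_le_of_le {w : ℕ → ℕ} {M : ℕ} (hM : ∀ i, w i ≤ M) (hβ : 1 < β) :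
    fword w β ≤ M / (β - 1) := by
  refine hasSum_le (fun i => ?_) (IsWord.summable_fword ⟨M, hM⟩ hβ).hasSum
    (hasSum_const_div_pow M hβ)
  gcongr
  exact_mod_cast hM i

lemma IsWord.exists_fword_le_one {z : ℕ → ℕ} (hz : IsWord z) : ∃ β, 1 < β ∧ fword z β ≤ 1 := by
  obtain ⟨M, hM⟩ := hz
  have hM0 : (0 : ℝ) ≤ M := M.cast_nonneg
  refine ⟨M + 2, by linarith, (fword_le_of_le hM (by linarith)).trans ?_⟩
  rw [div_le_one (by linarith)]
  linarith

lemma fword_eq_sum_range_add {w : ℕ → ℕ} (hw : IsWord w) (hβ : 1 < β) (n : ℕ) :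
    fword w β = ∑ i ∈ Finset.range n, (w i : ℝ) / β ^ (i + 1) + fword (shift n w) β / β ^ n := by
  rw [fword, ← (hw.summable_fword hβ).sum_add_tsum_nat_add n, fword, ← tsum_div_const]
  congr 1
  refine tsum_congr fun i => ?_
  rw [shift, div_div, ← pow_add]
  ring_nf

lemma fword_le_of_lexLt {v z : ℕ → ℕ} (hv : IsWord v) (hz : IsWord z) (hβ : 1 < β)
    (hlt : LexLt v z) :
    ∃ n, 1 ≤ n ∧ fword v β ≤ fword z β + (fword (shift n v) β - 1) / β ^ n := by
  obtain ⟨i, hpre, hi⟩ := hlt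
  refine ⟨i + 1, by omega, ?_⟩
  have hprefix : ∑ j ∈ Finset.range (i + 1), (v j : ℝ) / β ^ (j + 1)
      ≤ ∑ j ∈ Finset.range (i + 1), (z j : ℝ) / β ^ (j + 1) - 1 / β ^ (i + 1) := by
    rw [Finset.sum_range_succ, Finset.sum_range_succ,
      Finset.sum_congr rfl fun j hj => by rw [hpre j (Finset.mem_range.1 hj)]]
    have hvi : (v i : ℝ) + 1 ≤ z i := by exact_mod_cast hi
    have : (v i : ℝ) / β ^ (i + 1) ≤ z i / β ^ (i + 1) - 1 / β ^ (i + 1) := by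
      rw [← sub_div]; gcongr; linarith
    linarith
  have hzprefix : ∑ j ∈ Finset.range (i + 1), (z j : ℝ) / β ^ (j + 1) ≤ fword z β :=
    (hz.summable_fword hβ).sum_le_tsum _ fun j _ => by positivity
  rw [fword_eq_sum_range_add hv hβ (i + 1), sub_div]
  linarith

lemma fword_shift_le_one {w z : ℕ → ℕ} (hz : IsWord z) (hβ : 1 < β) (hfz : fword z β ≤ 1)
    (h : ∀ k, LexLe (shift k w) z) (k : ℕ) : fword (shift k w) β ≤ 1 := by
  have hw : IsWord w := ⟨z 0, le_of_forall_lexLe_shift h⟩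
  have hbdd : BddAbove (Set.range fun k => fword (shift k w) β) := by
    obtain ⟨M, hM⟩ := hw
    exact ⟨M / (β - 1), Set.forall_mem_range.2 fun k => fword_le_of_le (fun _ => hM _) hβ⟩
  set S := ⨆ k, fword (shift k w) β
  have hle_S : ∀ k, fword (shift k w) β ≤ S := le_ciSup hbdd
  suffices hS : S ≤ 1 from (hle_S k).trans hS
  by_contra! hS
  have hβ0 : 0 < β := one_pos.trans hβ
  have hstep : ∀ k, fword (shift k w) β ≤ 1 + (S - 1) / β := by
    intro k
    rcases h k with hlt | heq
    · obtain ⟨n, hn, hfk⟩ := fword_le_of_lexLt (hw.shift k) hz hβ hlt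
      have htail : fword (shift n (shift k w)) β ≤ S := shift_shift n k w ▸ hle_S (n + k)
      calc fword (shift k w) β ≤ 1 + (S - 1) / β ^ n := by
            have : (fword (shift n (shift k w)) β - 1) / β ^ n ≤ (S - 1) / β ^ n := by gcongr
            linarith
        _ ≤ 1 + (S - 1) / β := by
            have := div_le_div_of_nonneg_left (by linarith : 0 ≤ S - 1) hβ0
              (le_self_pow₀ hβ.le (by omega : n ≠ 0))
            linarith
    · rw [heq]
      have : 0 ≤ (S - 1) / β := div_nonneg (by linarith) hβ0.le
      linarith
  have hS_le : S ≤ 1 + (S - 1) / β := ciSup_le hstep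
  have : (S - 1) / β < S - 1 := div_lt_self (by linarith) hβ
  linarith

end fword

lemma Bhat_le_Bhat {v z : ℕ → ℕ} (hz : IsWord z) (hzero : z = (fun _ => 0) → v = fun _ => 0)
    (hf : ∀ β, 1 < β → fword z β ≤ 1 → fword v β ≤ 1) : Bhat v ≤ Bhat z := by
  by_cases hv : v = fun _ => 0
  · rw [Bhat, if_pos hv, Bhat]
    split_ifs
    exacts [le_rfl, Real.sInf_nonneg fun β hβ => (one_pos.trans hβ.1).le]
  have hz0 : z ≠ fun _ => 0 := fun h => hv (hzero h)
  rw [Bhat, Bhat, if_neg hv, if_neg hz0]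
  obtain ⟨β₀, hβ₀⟩ := hz.exists_fword_le_one
  exact csInf_le_csInf ⟨1, fun β hβ => hβ.1.le⟩ ⟨β₀, hβ₀⟩
    fun β hβ => ⟨hβ.1, hf β hβ.1 hβ.2⟩

theorem stmt_16_general (w z : ℕ → ℕ) (hz : IsWord z)
    (h : ∀ j : ℕ, LexLe (shift j w) z) :
    ∀ j : ℕ, Bhat (shift j w) ≤ Bhat z := by
  intro j
  refine Bhat_le_Bhat hz (fun hz0 => ?_) fun β hβ hfz => fword_shift_le_one hz hβ hfz h j
  funext i
  simpa [hz0, shift] using le_of_forall_lexLe_shift h (i + j)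

/-- Let `w` and `z` be words such that `σ^j w ≤ z` lexicographically for
every `j ≥ 0`. Then `B̂(σ^j w) ≤ B̂(z)` for every `j ≥ 0`. -/
theorem stmt_16 (w z : ℕ → ℕ) (hw : IsWord w) (hz : IsWord z)
    (h : ∀ j : ℕ, LexLe (shift j w) z) :
    ∀ j : ℕ, Bhat (shift j w) ≤ Bhat z :=
  stmt_16_general w z hz h
end

section
/- For every bounded sequence w : ℕ → ℕ that is not identically zero, there exists a unique real number β ≥ 1 such that the series ∑_{i≥0} w_i β^{−(i+1)} is summable with sum equal to 1. -/
/-!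
The function `β ↦ ∑ wᵢ β^{-(i+1)}` is strictly decreasing wherever it converges, which gives
uniqueness. For existence, bounding `wᵢ ≤ M` by the geometric series shows the sum is at most
`M / (β - 1) ≤ 1` for large `β`. If some partial sum `∑_{i<N} wᵢ` exceeds `1`, then by continuity
of that partial sum at `β = 1` the series exceeds `1` slightly to the right of `1`, and the
intermediate value theorem produces a root. Otherwise all partial sums are at most `1`, so the
series converges at `β = 1` to a sum that is at most `1` and at least `w_n ≥ 1`.
-/

open Topology Finset Set

lemma hasSum_div_pow_succ (c : ℝ) {β : ℝ} (hβ : 1 < β) :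
    HasSum (fun i : ℕ => c / β ^ (i + 1)) (c / (β - 1)) := by
  have hβ0 : 0 < β := one_pos.trans hβ
  have hgeo := (hasSum_geometric_of_lt_one (inv_nonneg.2 hβ0.le)
    (inv_lt_one_of_one_lt₀ hβ)).mul_left (c * β⁻¹)
  have hβ1 : β - 1 ≠ 0 := by linarith
  have hterm : (fun i : ℕ => c / β ^ (i + 1)) = fun i => c * β⁻¹ * β⁻¹ ^ i := by
    ext i
    rw [inv_pow, pow_succ]
    field_simp
  have hsum : c / (β - 1) = c * β⁻¹ * (1 - β⁻¹)⁻¹ := by field_simp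
  rwa [hterm, hsum]

section

variable {w : ℕ → ℕ} {M : ℕ}

lemma div_pow_succ_le_of_le (hM : ∀ i, w i ≤ M) {β : ℝ} (hβ : 0 < β) (i : ℕ) :
    (w i : ℝ) / β ^ (i + 1) ≤ M / β ^ (i + 1) := by
  gcongr
  exact_mod_cast hM i

lemma summable_div_pow_succ (hM : ∀ i, w i ≤ M) {β : ℝ} (hβ : 1 < β) :
    Summable (fun i : ℕ => (w i : ℝ) / β ^ (i + 1)) :=
  (hasSum_div_pow_succ M hβ).summable.of_nonneg_of_le (fun _ => by positivity)
    (div_pow_succ_le_of_le hM (one_pos.trans hβ))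

lemma fword_le_div (hM : ∀ i, w i ≤ M) {β : ℝ} (hβ : 1 < β) : fword w β ≤ M / (β - 1) :=
  hasSum_le (div_pow_succ_le_of_le hM (one_pos.trans hβ))
    (summable_div_pow_succ hM hβ).hasSum (hasSum_div_pow_succ M hβ)

lemma continuousOn_fword (hM : ∀ i, w i ≤ M) {β₀ : ℝ} (hβ₀ : 1 < β₀) :
    ContinuousOn (fword w) (Ici β₀) := by
  refine continuousOn_tsum (fun i => ?_) (hasSum_div_pow_succ M hβ₀).summable
    (fun i x hx => ?_)
  · exact continuousOn_const.div (continuousOn_pow _)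
      (fun x hx => pow_ne_zero _ (one_pos.trans (hβ₀.trans_le hx)).ne')
  · have hx0 : 0 < x := one_pos.trans (hβ₀.trans_le hx)
    rw [Real.norm_of_nonneg (div_nonneg (Nat.cast_nonneg _) (pow_nonneg hx0.le _))]
    exact (div_pow_succ_le_of_le hM hx0 i).trans (by gcongr; exact hx)

lemma exists_fword_eq_one_of_one_le (hM : ∀ i, w i ≤ M) {β₀ : ℝ} (hβ₀ : 1 < β₀)
    (h : 1 ≤ fword w β₀) : ∃ β, β₀ ≤ β ∧ fword w β = 1 := by
  set b := max β₀ (M + 1)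
  have hMb : (M : ℝ) ≤ b - 1 := by linarith [le_max_right β₀ (M + 1)]
  have hb : fword w b ≤ 1 :=
    (fword_le_div hM (hβ₀.trans_le (le_max_left _ _))).trans
      (div_le_one_of_le₀ hMb ((Nat.cast_nonneg M).trans hMb))
  obtain ⟨β, hβ, hβ1⟩ := intermediate_value_Icc' (le_max_left β₀ (M + 1))
    ((continuousOn_fword hM hβ₀).mono Icc_subset_Ici_self) ⟨hb, h⟩
  exact ⟨β, hβ.1, hβ1⟩

lemma exists_one_lt_fword (hM : ∀ i, w i ≤ M) {N : ℕ} (hN : 1 < ∑ i ∈ range N, (w i : ℝ)) :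
    ∃ β, 1 < β ∧ 1 < fword w β := by
  have hcont : ContinuousAt (fun β : ℝ => ∑ i ∈ range N, (w i : ℝ) / β ^ (i + 1)) 1 := by
    fun_prop (disch := norm_num)
  have hnear : ∀ᶠ β in 𝓝[>] (1 : ℝ), 1 < ∑ i ∈ range N, (w i : ℝ) / β ^ (i + 1) :=
    nhdsWithin_le_nhds (hcont.eventually (lt_mem_nhds (by simpa using hN)))
  obtain ⟨β, hβ1, hβ⟩ := (hnear.and self_mem_nhdsWithin).exists
  exact ⟨β, hβ, hβ1.trans_le
    ((summable_div_pow_succ hM hβ).sum_le_tsum _ (fun _ _ => by positivity))⟩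

lemma exists_fword_eq_one (hM : ∀ i, w i ≤ M) {n : ℕ} (hn : w n ≠ 0) :
    ∃ β, 1 ≤ β ∧ Summable (fun i : ℕ => (w i : ℝ) / β ^ (i + 1)) ∧ fword w β = 1 := by
  by_cases h : ∃ N, 1 < ∑ i ∈ range N, (w i : ℝ)
  · obtain ⟨N, hN⟩ := h
    obtain ⟨β₀, hβ₀, hf⟩ := exists_one_lt_fword hM hN
    obtain ⟨β, hβ, hβ1⟩ := exists_fword_eq_one_of_one_le hM hβ₀ hf.le
    exact ⟨β, by linarith, summable_div_pow_succ hM (by linarith), hβ1⟩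
  · push Not at h
    have hs : Summable (fun i => (w i : ℝ)) :=
      summable_of_sum_range_le (fun _ => by positivity) h
    have hwn : (1 : ℝ) ≤ w n := by exact_mod_cast Nat.one_le_iff_ne_zero.2 hn
    refine ⟨1, le_rfl, by simpa using hs, ?_⟩
    simp only [fword, one_pow, div_one]
    exact le_antisymm (hs.tsum_le_of_sum_range_le h)
      (hwn.trans (hs.le_tsum n (fun _ _ => by positivity)))

lemma fword_lt_fword {n : ℕ} (hn : w n ≠ 0) {β γ : ℝ} (hβ : 0 < β) (hβγ : β < γ)
    (hs : Summable (fun i : ℕ => (w i : ℝ) / β ^ (i + 1))) : fword w γ < fword w β := by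
  have hle : ∀ i, (w i : ℝ) / γ ^ (i + 1) ≤ (w i : ℝ) / β ^ (i + 1) := fun i => by gcongr
  have hlt : (w n : ℝ) / γ ^ (n + 1) < (w n : ℝ) / β ^ (n + 1) :=
    div_lt_div_of_pos_left (Nat.cast_pos.2 (Nat.pos_of_ne_zero hn)) (pow_pos hβ _)
      (pow_lt_pow_left₀ hβγ hβ.le (Nat.succ_ne_zero n))
  have hγ : 0 < γ := hβ.trans hβγ
  exact (hs.of_nonneg_of_le (fun _ => div_nonneg (Nat.cast_nonneg _) (pow_nonneg hγ.le _))
    hle).tsum_lt_tsum hle hlt hs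

end

/-- For every bounded sequence `w : ℕ → ℕ` that is not identically zero,
there is a unique real `β ≥ 1` such that `∑_{i≥0} w_i β^{-(i+1)}` is summable with sum 1. -/
theorem stmt_19 (w : ℕ → ℕ) (hw : IsWord w) (hw0 : w ≠ fun _ => 0) :
    ∃! β : ℝ, 1 ≤ β ∧ Summable (fun i : ℕ => (w i : ℝ) / β ^ (i + 1)) ∧
      ∑' i : ℕ, (w i : ℝ) / β ^ (i + 1) = 1 := by
  obtain ⟨M, hM⟩ := hw
  obtain ⟨n, hn⟩ : ∃ n, w n ≠ 0 := Function.ne_iff.mp hw0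
  obtain ⟨β, hβ⟩ := exists_fword_eq_one hM hn
  refine ⟨β, hβ, fun γ hγ => ?_⟩
  have hβγ : fword w γ = fword w β := hγ.2.2.trans hβ.2.2.symm
  by_contra hne
  rcases lt_or_gt_of_ne hne with h | h
  · exact (fword_lt_fword hn (one_pos.trans_le hγ.1) h hγ.2.1).ne' hβγ
  · exact (fword_lt_fword hn (one_pos.trans_le hβ.1) h hβ.2.1).ne hβγ
end
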